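/- For all n ≥ 2, the maximum number of 2-edges in a 2-graph H ⊆ 2(n,2) that does not contain a 3-copy of the triangle is exactly 4·⌊n²/4⌋. That is, ex(n, C₃, 2) = 4·⌊n²/4⌋. -/

import Mathlib

open Finset

/-- The support of a vector: indices of nonzero entries. -/
def qsupport {n : ℕ} (x : Fin n → ℕ) : Finset (Fin n) :=
  Finset.univ.filter (fun i => x i ≠ 0)

/-- `Qset q n` : all q-edges, i.e. vectors in `{0,…,q}^n` with exactly two nonzero entries. -/
def Qset (q n : ℕ) : Finset (Fin n → ℕ) :=
  ((Finset.univ : Finset (Fin n → Fin (q+1))).image (fun f i => (f i : ℕ))).filter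
    (fun x => (qsupport x).card = 2)

/-- The q-edge with support `{i,j}`, value `a` at `i` and `b` at `j`. -/
def qedge {n : ℕ} (i j : Fin n) (a b : ℕ) : Fin n → ℕ :=
  fun k => if k = i then a else if k = j then b else 0

/-- `H` is an `s`-copy of the graph `F`. -/
def IsSCopy {α : Type} [Fintype α] (s : ℕ) (F : SimpleGraph α) {n : ℕ}
    (H : Finset (Fin n → ℕ)) : Prop :=
  ∃ ι : α → Fin n, Function.Injective ι ∧
    (∀ u v : α, F.Adj u v ↔ ∃ x ∈ H, qsupport x = {ι u, ι v}) ∧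
    H.card = Nat.card F.edgeSet ∧
    ∀ x ∈ H, ∀ y ∈ H, x ≠ y → ∀ i, x i ≠ 0 → y i ≠ 0 → s ≤ x i + y i

/-- `H` contains an `s`-copy of `F`. -/
def ContainsSCopy {α : Type} [Fintype α] (s : ℕ) (F : SimpleGraph α) {n : ℕ}
    (H : Finset (Fin n → ℕ)) : Prop :=
  ∃ H' ⊆ H, IsSCopy s F H'

/-- The ordinary Turán number `ex(n,F)`. -/
noncomputable def exNum {α : Type} [Fintype α] (n : ℕ) (F : SimpleGraph α) : ℕ :=
  sSup {m | ∃ G : SimpleGraph (Fin n),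
    (¬ ∃ φ : F →g G, Function.Injective φ) ∧ m = Nat.card G.edgeSet}

/-- The Turán number `ex(n,F,q,s)`. -/
noncomputable def exQ {α : Type} [Fintype α] (n : ℕ) (F : SimpleGraph α) (q s : ℕ) : ℕ :=
  sSup {m | ∃ H ⊆ Qset q n, ¬ ContainsSCopy s F H ∧ m = H.card}

/-!
Lower bound: take all four 2-edges on every edge of a balanced complete bipartite graph; a
3-copy of the triangle would need a triangle in the bipartite graph underneath.

Upper bound: every 2-edge has exactly two ordered representations `(i, j, x i, x j)`. On an
ordered pair, the numbers of represented types from `{(1,2),(2,1)}` and from `{(1,1),(2,2)}`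
give two symmetric weights `w ≤ 2`, and in neither can a triangle carry two edges of weight 2
and a third of positive weight, because then three of these 2-edges form a 3-copy. Such a weight
on `k` vertices has total (ordered) mass at most `4⌊k²/4⌋`: without weight-2 edges this is
the trivial `k(k-1)`, and otherwise deleting both ends of a weight-2 edge removes mass at most
`4k - 4`. Hence `2|H| ≤ 8⌊n²/4⌋`.
-/

section QEdge

variable {n q : ℕ} {x : Fin n → ℕ} {i j : Fin n} {a b : ℕ}

@[simp] lemma mem_qsupport : i ∈ qsupport x ↔ x i ≠ 0 := by simp [qsupport]

@[simp] lemma qedge_apply_left : qedge i j a b i = a := by simp [qedge]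

lemma qedge_apply_right (hij : i ≠ j) : qedge i j a b j = b := by simp [qedge, hij.symm]

lemma qedge_comm (hij : i ≠ j) : qedge i j a b = qedge j i b a := by
  funext k
  by_cases hki : k = i <;> by_cases hkj : k = j <;> simp_all [qedge]

lemma qsupport_qedge (hij : i ≠ j) (ha : a ≠ 0) (hb : b ≠ 0) :
    qsupport (qedge i j a b) = {i, j} := by
  ext k
  by_cases hki : k = i <;> by_cases hkj : k = j <;> simp_all [qedge]

lemma qsupport_qedge_self_subset : qsupport (qedge i i a b) ⊆ {i} := by
  intro k
  by_cases hki : k = i <;> simp_all [qedge]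

lemma mem_Qset : x ∈ Qset q n ↔ (∀ i, x i ≤ q) ∧ #(qsupport x) = 2 := by
  simp only [Qset, mem_filter, mem_image, mem_univ, true_and, and_congr_left_iff]
  refine fun _ ↦ ⟨?_, fun h ↦ ⟨fun i ↦ ⟨x i, Nat.lt_succ_of_le (h i)⟩, rfl⟩⟩
  rintro ⟨f, rfl⟩ i
  exact Nat.lt_succ_iff.mp (f i).isLt

lemma qedge_mem_Qset (hij : i ≠ j) (ha : a ≠ 0) (hb : b ≠ 0) (haq : a ≤ q) (hbq : b ≤ q) :
    qedge i j a b ∈ Qset q n := by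
  refine mem_Qset.2 ⟨fun k ↦ ?_, by rw [qsupport_qedge hij ha hb, card_pair hij]⟩
  by_cases hki : k = i <;> by_cases hkj : k = j <;> simp_all [qedge]

lemma qedge_self_notMem_Qset : qedge i i a b ∉ Qset q n := by
  intro h
  have := (mem_Qset.1 h).2 ▸ card_le_card (qsupport_qedge_self_subset (a := a) (b := b))
  simp at this

lemma eq_qedge_of_qsupport_eq (h : qsupport x = {i, j}) : x = qedge i j (x i) (x j) := by
  funext k
  by_cases hki : k = i
  · simp [hki]
  by_cases hkj : k = j
  · subst hkj
    rw [qedge_apply_right (Ne.symm hki)]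
  · have : x k = 0 := by simpa [h, hki, hkj] using (mem_qsupport (x := x) (i := k)).not
    simp [qedge, hki, hkj, this]

end QEdge

section Triangle

variable {n s : ℕ}

lemma le_add_of_qsupport_inter_eq {x y : Fin n → ℕ} {a : Fin n}
    (h : qsupport x ∩ qsupport y = {a}) (hs : s ≤ x a + y a) :
    ∀ i, x i ≠ 0 → y i ≠ 0 → s ≤ x i + y i := by
  intro i hx hy
  have : i ∈ qsupport x ∩ qsupport y := by simp [hx, hy]
  rw [h, mem_singleton] at this
  rwa [this]

lemma isSCopy_triangle {x y z : Fin n → ℕ} {a b c : Fin n}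
    (hab : a ≠ b) (hac : a ≠ c) (hbc : b ≠ c)
    (hx : qsupport x = {a, b}) (hy : qsupport y = {a, c}) (hz : qsupport z = {b, c})
    (hxy : s ≤ x a + y a) (hxz : s ≤ x b + z b) (hyz : s ≤ y c + z c) :
    IsSCopy s (⊤ : SimpleGraph (Fin 3)) {x, y, z} := by
  have hx_ne_y : x ≠ y := fun h ↦ by simpa [h, hy, hab.symm, hbc] using hx.ge (by simp : b ∈ _)
  have hx_ne_z : x ≠ z := fun h ↦ by simpa [h, hz, hab, hac] using hx.ge (by simp : a ∈ _)
  have hy_ne_z : y ≠ z := fun h ↦ by simpa [h, hz, hab, hac] using hy.ge (by simp : a ∈ _)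
  replace hxy := le_add_of_qsupport_inter_eq (by rw [hx, hy]; ext; simp; grind) hxy
  replace hxz := le_add_of_qsupport_inter_eq (by rw [hx, hz]; ext; simp; grind) hxz
  replace hyz := le_add_of_qsupport_inter_eq (by rw [hy, hz]; ext; simp; grind) hyz
  refine ⟨![a, b, c], ?_, fun u v ↦ ⟨fun huv ↦ ?_, ?_⟩, ?_, ?_⟩
  · intro u v
    fin_cases u <;> fin_cases v <;> simp [hab, hac, hbc, hab.symm, hac.symm, hbc.symm]
  · rw [SimpleGraph.top_adj] at huv
    fin_cases u <;> fin_cases v <;> simp_all [pair_comm]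
  · rintro ⟨w, hw, hwuv⟩
    have : #(qsupport w) = 2 := by
      simp only [mem_insert, mem_singleton] at hw
      rcases hw with rfl | rfl | rfl
      exacts [hx ▸ card_pair hab, hy ▸ card_pair hac, hz ▸ card_pair hbc]
    rintro rfl
    simp [hwuv] at this
  · rw [card_eq_three.2 ⟨x, y, z, hx_ne_y, hx_ne_z, hy_ne_z, rfl⟩, Nat.card_eq_fintype_card]
    decide
  · simp only [mem_insert, mem_singleton]
    rintro u (rfl | rfl | rfl) v (rfl | rfl | rfl) huv i hu hv
    all_goals first
      | exact absurd rfl huv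
      | grind

end Triangle

lemma sq_mod_four_le_one (k : ℕ) : k ^ 2 % 4 ≤ 1 := by
  rw [Nat.pow_mod]
  have := Nat.mod_lt k (show 4 > 0 by norm_num)
  interval_cases k % 4 <;> simp

lemma mul_pred_le_four_mul_sq_div_four (k : ℕ) : k * (k - 1) ≤ 4 * (k ^ 2 / 4) := by
  have h := sq_mod_four_le_one k
  rcases k with _ | k
  · simp
  · have : (k + 1) ^ 2 = (k + 1) * (k + 1 - 1) + k + 1 := by simp; ring
    omega

lemma div_two_mul_sub_div_two (k : ℕ) : k / 2 * (k - k / 2) = k ^ 2 / 4 := by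
  rcases Nat.even_or_odd' k with ⟨m, rfl | rfl⟩
  · rw [show (2 * m) ^ 2 = 4 * (m * m) by ring, show 2 * m / 2 = m by omega,
      show 2 * m - m = m by omega]
    omega
  · rw [show (2 * m + 1) ^ 2 = 4 * (m * (m + 1)) + 1 by ring,
      show (2 * m + 1) / 2 = m by omega, show 2 * m + 1 - m = m + 1 by omega]
    omega

section WeightedMantel

variable {α : Type*} [DecidableEq α] {w : α → α → ℕ}

lemma sum_sum_insert_insert_of_symm (hsymm : ∀ a b, w a b = w b a) (hdiag : ∀ a, w a a = 0)
    {u v : α} {V : Finset α} (hu : u ∉ V) (hv : v ∉ V) (huv : u ≠ v) :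
    ∑ a ∈ insert u (insert v V), ∑ b ∈ insert u (insert v V), w a b =
      ∑ a ∈ V, ∑ b ∈ V, w a b + 2 * ∑ b ∈ V, (w u b + w v b) + 2 * w u v := by
  have hu' : u ∉ insert v V := mem_insert.not.2 (not_or.2 ⟨huv, hu⟩)
  have hcol : ∀ c, ∑ a ∈ V, w a c = ∑ b ∈ V, w c b := fun c ↦ sum_congr rfl fun a _ ↦ hsymm a c
  simp only [sum_insert hu', sum_insert hv, sum_add_distrib, hdiag, hcol, hsymm v u]
  ring

theorem weighted_mantel (hsymm : ∀ a b, w a b = w b a) (hdiag : ∀ a, w a a = 0)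
    (hle : ∀ a b, w a b ≤ 2)
    (htri : ∀ a b c, a ≠ b → a ≠ c → b ≠ c → w a b = 2 → w a c = 2 → w b c = 0)
    (V : Finset α) : ∑ a ∈ V, ∑ b ∈ V, w a b ≤ 4 * (#V ^ 2 / 4) := by
  induction V using Finset.strongInduction with | H V ih =>
  by_cases hheavy : ∃ u ∈ V, ∃ v ∈ V, w u v = 2
  · obtain ⟨u, hu, v, hv, huv⟩ := hheavy
    have hne : u ≠ v := by rintro rfl; simp [hdiag] at huv
    set V' := (V.erase u).erase v
    have hV : V = insert u (insert v V') := by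
      rw [insert_erase (mem_erase.2 ⟨hne.symm, hv⟩), insert_erase hu]
    have hu' : u ∉ V' := by simp [V']
    have hv' : v ∉ V' := by simp [V']
    have hcard : #V = #V' + 2 := by
      rw [hV, card_insert_of_notMem (by simp [hne, hu']), card_insert_of_notMem hv']
    have hlink : ∀ b ∈ V', w u b + w v b ≤ 2 := by
      intro b hb
      have hbu : b ≠ u := by rintro rfl; exact hu' hb
      have hbv : b ≠ v := by rintro rfl; exact hv' hb
      have h1 := htri u v b hne hbu.symm hbv.symm huv
      have h2 := htri v u b hne.symm hbv.symm hbu.symm (hsymm u v ▸ huv)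
      have := hle u b
      have := hle v b
      omega
    have hIH := ih V' ((erase_ssubset (mem_erase.2 ⟨hne.symm, hv⟩)).trans (erase_ssubset hu))
    have hsum := sum_le_sum hlink
    rw [sum_const, smul_eq_mul] at hsum
    rw [hcard, hV, sum_sum_insert_insert_of_symm hsymm hdiag hu' hv' hne, huv]
    rw [show (#V' + 2) ^ 2 = #V' ^ 2 + 4 * (#V' + 1) by ring]
    omega
  · simp only [not_exists, not_and] at hheavy
    calc ∑ a ∈ V, ∑ b ∈ V, w a b ≤ ∑ a ∈ V, (#V - 1) := by
          refine sum_le_sum fun a ha ↦ ?_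
          rw [← add_sum_erase V _ ha, hdiag, zero_add, ← card_erase_of_mem ha]
          simpa using sum_le_card_nsmul (V.erase a) (w a) 1 fun b hb ↦
            Nat.le_of_lt_succ <| (hle a b).lt_of_ne <| hheavy a ha b (mem_of_mem_erase hb)
      _ ≤ 4 * (#V ^ 2 / 4) := by
          rw [sum_const, smul_eq_mul]
          exact mul_pred_le_four_mul_sq_div_four _

end WeightedMantel

section TypeWeight

variable {n q s : ℕ} {H : Finset (Fin n → ℕ)} {T : Finset (ℕ × ℕ)}

def typeWeight (H : Finset (Fin n → ℕ)) (T : Finset (ℕ × ℕ)) (i j : Fin n) : ℕ :=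
  #{t ∈ T | qedge i j t.1 t.2 ∈ H}

lemma typeWeight_comm (hT : ∀ t ∈ T, t.swap ∈ T) (i j : Fin n) :
    typeWeight H T i j = typeWeight H T j i := by
  rcases eq_or_ne i j with rfl | hij
  · rfl
  refine card_nbij' Prod.swap Prod.swap ?_ ?_ (fun _ _ ↦ rfl) (fun _ _ ↦ rfl) <;>
    intro t ht <;> simp_all [qedge_comm hij]

lemma typeWeight_self (hH : H ⊆ Qset q n) (i : Fin n) : typeWeight H T i i = 0 := by
  rw [typeWeight, filter_false_of_mem fun _ _ h ↦ qedge_self_notMem_Qset (hH h), card_empty]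

lemma typeWeight_le_card (i j : Fin n) : typeWeight H T i j ≤ #T := card_filter_le _ _

lemma typeWeight_union {T' : Finset (ℕ × ℕ)} (h : Disjoint T T') (i j : Fin n) :
    typeWeight H (T ∪ T') i j = typeWeight H T i j + typeWeight H T' i j := by
  rw [typeWeight, filter_union, card_union_of_disjoint (disjoint_filter_filter h)]; rfl

lemma typeWeight_eq_zero_of_eq_card (hH : ¬ ContainsSCopy s (⊤ : SimpleGraph (Fin 3)) H)
    (hT₀ : ∀ t ∈ T, t.1 ≠ 0 ∧ t.2 ≠ 0)
    (hT : ∀ t ∈ T, ∃ x ∈ T, ∃ y ∈ T, s ≤ x.1 + y.1 ∧ s ≤ x.2 + t.1 ∧ s ≤ y.2 + t.2)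
    {a b c : Fin n} (hab : a ≠ b) (hac : a ≠ c) (hbc : b ≠ c)
    (h₁ : typeWeight H T a b = #T) (h₂ : typeWeight H T a c = #T) :
    typeWeight H T b c = 0 := by
  by_contra h₃
  obtain ⟨t, ht, hz⟩ := filter_nonempty_iff.1 (card_pos.1 (Nat.pos_of_ne_zero h₃))
  obtain ⟨x, hx, y, hy, hxy, hxz, hyz⟩ := hT t ht
  refine hH ⟨_, ?_, isSCopy_triangle hab hac hbc (qsupport_qedge hab (hT₀ x hx).1 (hT₀ x hx).2)
    (qsupport_qedge hac (hT₀ y hy).1 (hT₀ y hy).2) (qsupport_qedge hbc (hT₀ t ht).1 (hT₀ t ht).2)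
    ?_ ?_ ?_⟩
  · simp only [insert_subset_iff, singleton_subset_iff]
    exact ⟨filter_card_eq h₁ x hx, filter_card_eq h₂ y hy, hz⟩
  all_goals simpa [qedge_apply_right, hab, hac, hbc]

lemma two_mul_card_le_sum_typeWeight (hH : H ⊆ Qset 2 n) :
    2 * #H ≤ ∑ i, ∑ j, typeWeight H ({1, 2} ×ˢ {1, 2}) i j := by
  set R := {r ∈ (univ : Finset (Fin n)) ×ˢ (univ : Finset (Fin n)) ×ˢ
    ({1, 2} ×ˢ {1, 2} : Finset (ℕ × ℕ)) | qedge r.1 r.2.1 r.2.2.1 r.2.2.2 ∈ H}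
  have hR : #R = ∑ i, ∑ j, typeWeight H ({1, 2} ×ˢ {1, 2}) i j := by
    simp only [R, typeWeight, card_filter, sum_product]
  rw [← hR]
  refine mul_card_image_le_card_of_maps_to (fun r hr ↦ (mem_filter.1 hr).2) 2 fun x hx ↦ ?_
  obtain ⟨hle, hcard⟩ := mem_Qset.1 (hH hx)
  obtain ⟨i, j, hij, hsupp⟩ := card_eq_two.1 hcard
  have hval : ∀ k ∈ qsupport x, x k ∈ ({1, 2} : Finset ℕ) := fun k hk ↦ by
    have := hle k; simp at hk ⊢; omega
  have hx₁ := eq_qedge_of_qsupport_eq hsupp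
  have hx₂ := hx₁.trans (qedge_comm hij)
  calc 2 = #{(i, j, x i, x j), (j, i, x j, x i)} := (card_pair (by simp [hij])).symm
    _ ≤ _ := card_le_card fun r hr ↦ ?_
  simp only [mem_insert, mem_singleton] at hr
  rcases hr with rfl | rfl <;> simp [hval, hsupp, ← hx₁, ← hx₂, hx]

lemma sum_typeWeight_le (hH : H ⊆ Qset q n) (hfree : ¬ ContainsSCopy s (⊤ : SimpleGraph (Fin 3)) H)
    (hT₂ : #T = 2) (hswap : ∀ t ∈ T, t.swap ∈ T) (hT₀ : ∀ t ∈ T, t.1 ≠ 0 ∧ t.2 ≠ 0)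
    (hT : ∀ t ∈ T, ∃ x ∈ T, ∃ y ∈ T, s ≤ x.1 + y.1 ∧ s ≤ x.2 + t.1 ∧ s ≤ y.2 + t.2) :
    ∑ i, ∑ j, typeWeight H T i j ≤ 4 * (n ^ 2 / 4) := by
  simpa using weighted_mantel (typeWeight_comm hswap) (typeWeight_self hH)
    (fun i j ↦ hT₂ ▸ typeWeight_le_card i j)
    (fun a b c hab hac hbc h₁ h₂ ↦
      typeWeight_eq_zero_of_eq_card hfree hT₀ hT hab hac hbc (hT₂ ▸ h₁) (hT₂ ▸ h₂)) univ

end TypeWeight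

theorem card_le_of_not_containsSCopy {n : ℕ} {H : Finset (Fin n → ℕ)} (hH : H ⊆ Qset 2 n)
    (hfree : ¬ ContainsSCopy 3 (⊤ : SimpleGraph (Fin 3)) H) : #H ≤ 4 * (n ^ 2 / 4) := by
  have hsplit : ({1, 2} ×ˢ {1, 2} : Finset (ℕ × ℕ)) = {(1, 2), (2, 1)} ∪ {(1, 1), (2, 2)} := by
    decide
  have hdisj : Disjoint ({(1, 2), (2, 1)} : Finset (ℕ × ℕ)) {(1, 1), (2, 2)} := by decide
  have hcount := two_mul_card_le_sum_typeWeight hH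
  simp only [hsplit, typeWeight_union hdisj, sum_add_distrib] at hcount
  have h₁₂ := sum_typeWeight_le (T := {(1, 2), (2, 1)}) hH hfree (by decide) (by decide)
    (by decide) (by decide)
  have h₁₁₂₂ := sum_typeWeight_le (T := {(1, 1), (2, 2)}) hH hfree (by decide) (by decide)
    (by decide) (by decide)
  omega

lemma not_containsSCopy_triangle_of_bipartite {n s : ℕ} {H : Finset (Fin n → ℕ)}
    (A : Finset (Fin n)) (hH : ∀ x ∈ H, ∃ i ∈ A, ∃ j ∉ A, qsupport x = {i, j}) :
    ¬ ContainsSCopy s (⊤ : SimpleGraph (Fin 3)) H := by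
  rintro ⟨H', hH', ι, hι, hadj, -⟩
  have hcross : ∀ u v : Fin 3, u ≠ v → (ι u ∈ A ↔ ι v ∉ A) := by
    intro u v huv
    obtain ⟨x, hx, hxuv⟩ := (hadj u v).1 huv
    obtain ⟨i, hi, j, hj, hxij⟩ := hH x (hH' hx)
    rw [hxij] at hxuv
    have hu : ι u ∈ ({i, j} : Finset (Fin n)) := hxuv ▸ mem_insert_self _ _
    have hv : ι v ∈ ({i, j} : Finset (Fin n)) := hxuv ▸ mem_insert_of_mem (mem_singleton_self _)
    have hne : ι u ≠ ι v := hι.ne huv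
    simp only [mem_insert, mem_singleton] at hu hv
    rcases hu with hu | hu <;> rcases hv with hv | hv <;> simp_all
  have := hcross 0 1 (by decide)
  have := hcross 1 2 (by decide)
  have := hcross 0 2 (by decide)
  tauto

theorem exists_card_eq_of_not_containsSCopy (n : ℕ) :
    ∃ H ⊆ Qset 2 n, ¬ ContainsSCopy 3 (⊤ : SimpleGraph (Fin 3)) H ∧ #H = 4 * (n ^ 2 / 4) := by
  obtain ⟨A, -, hA⟩ := exists_subset_card_eq (show n / 2 ≤ #(univ : Finset (Fin n)) by simp; omega)
  set T : Finset (ℕ × ℕ) := {1, 2} ×ˢ {1, 2}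
  have hT : ∀ t ∈ T, t.1 ≠ 0 ∧ t.2 ≠ 0 ∧ t.1 ≤ 2 ∧ t.2 ≤ 2 := by decide
  have hAA : ∀ i ∈ A, ∀ j ∈ Aᶜ, i ≠ j := fun i hi j hj h ↦ mem_compl.1 hj (h ▸ hi)
  have hinj : Set.InjOn (fun q : (Fin n × Fin n) × ℕ × ℕ ↦ qedge q.1.1 q.1.2 q.2.1 q.2.2)
      ↑((A ×ˢ Aᶜ) ×ˢ T) := by
    rintro ⟨⟨i, j⟩, a, b⟩ hq ⟨⟨i', j'⟩, a', b'⟩ hq' heq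
    simp only [coe_product, Set.mem_prod, mem_coe, mem_compl] at hq hq'
    have hi := congrFun heq i
    have hj := congrFun heq j
    have := hT _ hq.2
    have := hT _ hq'.2
    simp only [qedge] at hi hj ⊢
    grind
  refine ⟨((A ×ˢ Aᶜ) ×ˢ T).image fun q ↦ qedge q.1.1 q.1.2 q.2.1 q.2.2, ?_,
    not_containsSCopy_triangle_of_bipartite A ?_, ?_⟩
  · rintro _ hx
    obtain ⟨⟨⟨i, j⟩, t⟩, hq, rfl⟩ := mem_image.1 hx
    simp only [mem_product] at hq
    obtain ⟨ha, hb, ha', hb'⟩ := hT t hq.2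
    exact qedge_mem_Qset (hAA i hq.1.1 j hq.1.2) ha hb ha' hb'
  · rintro _ hx
    obtain ⟨⟨⟨i, j⟩, t⟩, hq, rfl⟩ := mem_image.1 hx
    simp only [mem_product] at hq
    exact ⟨i, hq.1.1, j, mem_compl.1 hq.1.2,
      qsupport_qedge (hAA i hq.1.1 j hq.1.2) (hT t hq.2).1 (hT t hq.2).2.1⟩
  · rw [card_image_of_injOn hinj, card_product, card_product, card_compl, hA, Fintype.card_fin,
      div_two_mul_sub_div_two]
    simp [T, mul_comm]

theorem exQ_triangle_two_general (n : ℕ) :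
    exQ n (⊤ : SimpleGraph (Fin 3)) 2 3 = 4 * (n ^ 2 / 4) := by
  obtain ⟨H, hH, hfree, hcard⟩ := exists_card_eq_of_not_containsSCopy n
  refine IsGreatest.csSup_eq ⟨⟨H, hH, hfree, hcard.symm⟩, ?_⟩
  rintro _ ⟨H', hH', hfree', rfl⟩
  exact card_le_of_not_containsSCopy hH' hfree'

/-- `ex(n, C₃, 2) = 4·⌊n²/4⌋` for all `n ≥ 2`. -/
theorem exQ_triangle_two (n : ℕ) (hn : 2 ≤ n) :
    exQ n (⊤ : SimpleGraph (Fin 3)) 2 3 = 4 * (n ^ 2 / 4) :=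
  exQ_triangle_two_general n
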